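/- arXiv:2410.18263 — 2 statements merged into one kernel-verified Lean document; each statement's English description precedes it below -/
import Mathlib

section
/- Let x0, w be positive integers with x0·w = 2, N ≥ 1, and let y_1, …, y_N ∈ {0, x0}. Define the product P = ∏_{k=1}^N (1 − y_k·t) in the polynomial ring ℤ[t] modulo the relation t² = w·t (i.e., work in the quotient ring ℤ[t]/(t² − w·t)). Then the coefficient of t in P equals −x0 if the number of indices k with y_k = x0 is odd, and equals 0 if that number is even. -/
open Polynomial

/-- Corollary 4.4: in `ℤ[t]/(t² - w·t)` with `x0·w = 2`, the product
`∏ (1 - y_k·t)` with each `y_k ∈ {0, x0}` equals `1 + c·t` where `c = -x0` if the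
number of indices with `y_k = x0` is odd, and `c = 0` if that number is even. -/
theorem coeff_product_basic_degrees_fixed_mode
    (x0 w : ℤ) (hx0 : 0 < x0) (hw : 0 < w) (hxw : x0 * w = 2)
    (N : ℕ) (hN : 1 ≤ N) (y : Fin N → ℤ) (hy : ∀ k, y k = 0 ∨ y k = x0)
    (M : ℕ) (hM : M = (Finset.univ.filter (fun k => y k = x0)).card) :
    Ideal.Quotient.mk (Ideal.span {(X : ℤ[X]) ^ 2 - C w * X})
        (∏ k : Fin N, (1 - C (y k) * X))
      = Ideal.Quotient.mk (Ideal.span {(X : ℤ[X]) ^ 2 - C w * X})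
        (1 + C (if Odd M then -x0 else 0) * X) := by
  set I := Ideal.span {(X : ℤ[X]) ^ 2 - C w * X} with hI
  set q := Ideal.Quotient.mk I with hq
  set a := q (1 - C x0 * X) with ha
  have hC : (C x0 : ℤ[X]) * C w = 2 := by
    rw [← C_mul, hxw]; simp
  have key : ((1 : ℤ[X]) - C x0 * X) ^ 2 - 1 = ((X : ℤ[X]) ^ 2 - C w * X) * (C x0 * C x0) := by
    linear_combination ((X : ℤ[X]) * C x0) * hC
  have ha2 : a ^ 2 = 1 := by
    rw [ha, ← map_pow, ← map_one q, Ideal.Quotient.mk_eq_mk_iff_sub_mem]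
    rw [key]
    exact Ideal.mul_mem_right _ _ (Ideal.subset_span rfl)
  have hprod : q (∏ k : Fin N, (1 - C (y k) * X)) = a ^ M := by
    rw [map_prod]
    have : ∀ k : Fin N, q (1 - C (y k) * X) = if y k = x0 then a else 1 := by
      intro k
      rcases hy k with h | h
      · simp [h, hx0.ne]
      · rw [h, if_pos rfl, ha]
    rw [Finset.prod_congr rfl (fun k _ => this k), Finset.prod_ite, Finset.prod_const,
      Finset.prod_const_one, mul_one, hM]
  rw [hprod]
  rcases Nat.even_or_odd M with he | ho
  · obtain ⟨m, rfl⟩ := he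
    rw [if_neg (Nat.not_odd_iff_even.mpr ⟨m, rfl⟩)]
    rw [← two_mul, pow_mul, ha2, one_pow]
    simp
  · obtain ⟨m, rfl⟩ := ho
    rw [if_pos ⟨m, rfl⟩]
    rw [pow_succ, pow_mul, ha2, one_pow, one_mul, ha]
    congr 1
    simp [map_neg]
    ring
end

section
/- Let f : ℝ^n → ℝ^n be continuous and suppose there exists M > 0 such that f(x)·x > 0 whenever |x| ≥ M (Nagumo condition). If x : ℝ → ℝ^n is a twice continuously differentiable periodic solution of ẍ = f(x), then |x(t)| < M for all t. (Hint/outline: at a maximum t₀ of g(t) = |x(t)|²/2, one has g''(t₀) ≤ 0; but g''(t₀) = |ẋ(t₀)|² + x(t₀)·ẍ(t₀) = |ẋ(t₀)|² + f(x(t₀))·x(t₀) > 0 if |x(t₀)| ≥ M, a contradiction.) -/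
open Filter Topology

/-!
At a maximum `t₀` of the periodic function `‖x t‖²`, its second derivative
`2 (‖ẋ t₀‖² + ⟪x t₀, f (x t₀)⟫)` is nonpositive, which the Nagumo condition forbids when
`‖x t₀‖ ≥ M`.
-/

theorem Function.Periodic.exists_forall_ge {α : Type*} [TopologicalSpace α] [LinearOrder α]
    [ClosedIciTopology α] {f : ℝ → α} {c : ℝ} (hp : Function.Periodic f c) (hc : c ≠ 0)
    (hf : Continuous f) : ∃ x, ∀ y, f y ≤ f x := by
  obtain ⟨_, ⟨x, rfl⟩, hx⟩ :=
    (hp.compact_of_continuous hc hf).exists_isGreatest (Set.range_nonempty f)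
  exact ⟨x, fun y => hx ⟨y, rfl⟩⟩

theorem IsLocalMax.deriv_deriv_nonpos {f : ℝ → ℝ} {x₀ : ℝ} (hmax : IsLocalMax f x₀)
    (hc : ContinuousAt f x₀) : deriv (deriv f) x₀ ≤ 0 := by
  by_contra! hpos
  have hmin := isLocalMin_of_deriv_deriv_pos hpos hmax.deriv_eq_zero hc
  have hconst : f =ᶠ[𝓝 x₀] fun _ => f x₀ :=
    (hmin.and hmax).mono fun _ h => le_antisymm h.2 h.1
  have : deriv (deriv f) x₀ = 0 := by
    rw [hconst.deriv.deriv_eq]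
    simp
  exact hpos.ne' this

theorem deriv_deriv_norm_sq {E : Type*} [NormedAddCommGroup E] [InnerProductSpace ℝ E]
    {x : ℝ → E} {t : ℝ} (hx : Differentiable ℝ x) (hx' : DifferentiableAt ℝ (deriv x) t) :
    deriv (deriv fun s => ‖x s‖ ^ 2) t =
      2 * (‖deriv x t‖ ^ 2 + inner ℝ (x t) (deriv (deriv x) t)) := by
  have hderiv : deriv (fun s => ‖x s‖ ^ 2) = fun s => 2 * inner ℝ (x s) (deriv x s) :=
    funext fun s => (hx s).hasDerivAt.norm_sq.deriv
  rw [hderiv, ((hx t).hasDerivAt.inner ℝ hx'.hasDerivAt).const_mul 2 |>.deriv,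
    real_inner_self_eq_norm_sq]
  ring

theorem apriori_bound_nagumo_general
    (n : ℕ) (f : EuclideanSpace ℝ (Fin n) → EuclideanSpace ℝ (Fin n))
    (M : ℝ)
    (hNagumo : ∀ y : EuclideanSpace ℝ (Fin n), M ≤ ‖y‖ → 0 < inner (𝕜 := ℝ) (f y) y)
    (x : ℝ → EuclideanSpace ℝ (Fin n)) (hx : ContDiff ℝ 2 x)
    (p : ℝ) (hp : 0 < p) (hper : Function.Periodic x p)
    (hode : ∀ t, deriv (deriv x) t = f (x t)) :
    ∀ t : ℝ, ‖x t‖ < M := by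
  have hcont : Continuous fun t => ‖x t‖ ^ 2 := by fun_prop
  obtain ⟨t₀, hmax⟩ :=
    (hper.comp fun y => ‖y‖ ^ 2).exists_forall_ge hp.ne' hcont
  have hbound : ‖x t₀‖ < M := by
    by_contra! hge
    have hlocal : IsLocalMax (fun t => ‖x t‖ ^ 2) t₀ := Eventually.of_forall hmax
    have hconcave := hlocal.deriv_deriv_nonpos hcont.continuousAt
    rw [deriv_deriv_norm_sq (hx.differentiable two_ne_zero)
      (hx.differentiable_deriv_two t₀), hode, real_inner_comm] at hconcave
    nlinarith [hNagumo _ hge, sq_nonneg ‖deriv x t₀‖]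
  intro t
  have hsq : ‖x t‖ ^ 2 ≤ ‖x t₀‖ ^ 2 := hmax t
  exact ((pow_le_pow_iff_left₀ (norm_nonneg _) (norm_nonneg _) two_ne_zero).mp hsq).trans_lt
    hbound

/-- A-priori bound from the Nagumo condition: if `f` is continuous and `⟪f x, x⟫ > 0`
whenever `‖x‖ ≥ M`, then any `C²` periodic solution of `ẍ = f(x)` satisfies
`‖x(t)‖ < M` for all `t`. -/
theorem apriori_bound_nagumo
    (n : ℕ) (f : EuclideanSpace ℝ (Fin n) → EuclideanSpace ℝ (Fin n))
    (hf : Continuous f) (M : ℝ) (hM : 0 < M)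
    (hNagumo : ∀ y : EuclideanSpace ℝ (Fin n), M ≤ ‖y‖ → 0 < inner (𝕜 := ℝ) (f y) y)
    (x : ℝ → EuclideanSpace ℝ (Fin n)) (hx : ContDiff ℝ 2 x)
    (p : ℝ) (hp : 0 < p) (hper : Function.Periodic x p)
    (hode : ∀ t, deriv (deriv x) t = f (x t)) :
    ∀ t : ℝ, ‖x t‖ < M :=
  apriori_bound_nagumo_general n f M hNagumo x hx p hp hper hode
end
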